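/- arXiv:1007.4025 — 2 statements merged into one kernel-verified Lean document; each statement's English description precedes it below -/
import Mathlib

section
/- Let u : ℝ → ℂ be continuously differentiable with compact support. Then for every R ≥ 0, ∫_R^∞ |u(r)|⁴ dr ≤ 8 ‖u'‖_{L²(R,∞)}^{5/2} · ‖r·u‖_{L²(R,∞)}^{3/2}. -/
open MeasureTheory Set

/-!
With all `L²` norms taken over `(R, ∞)`: for `r ≥ R`,
`‖u r‖² = -∫_r^∞ (‖u‖²)' ≤ 2 ∫_R^∞ ‖u‖ ‖u'‖ ≤ 2 ‖u‖ ‖u'‖` by Cauchy–Schwarz, and integrating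
`(r ‖u‖²)' = ‖u‖² + r (‖u‖²)'` over `(R, ∞)`, where the boundary term `-R ‖u R‖²` is nonpositive,
gives `‖u‖² ≤ 2 ‖r u‖ ‖u'‖`. Hence
`∫ ‖u‖⁴ ≤ sup ‖u‖² · ‖u‖² ≤ 2 ‖u'‖ ‖u‖³ ≤ 2 ‖u'‖ (2 ‖r u‖ ‖u'‖)^{3/2} ≤ 8 ‖u'‖^{5/2} ‖r u‖^{3/2}`.
-/

theorem integral_norm_mul_norm_le_sqrt_mul_sqrt {α E : Type*} [MeasurableSpace α]
    {μ : Measure α} [NormedAddCommGroup E] {f g : α → E}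
    (hf : MemLp f 2 μ) (hg : MemLp g 2 μ) :
    ∫ a, ‖f a‖ * ‖g a‖ ∂μ ≤ √(∫ a, ‖f a‖ ^ 2 ∂μ) * √(∫ a, ‖g a‖ ^ 2 ∂μ) := by
  have := integral_mul_norm_le_Lp_mul_Lq Real.HolderConjugate.two_two
    (by simpa using hf) (by simpa using hg)
  simpa [Real.sqrt_eq_rpow] using this

theorem mul_pow_three_le_of_sq_le {A B C : ℝ} (hA : 0 ≤ A) (hC : 0 ≤ C)
    (h : B ^ 2 ≤ 2 * (C * A)) :
    2 * A * B ^ 3 ≤ 8 * A ^ ((5 : ℝ) / 2) * C ^ ((3 : ℝ) / 2) := by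
  obtain ⟨a, ha, rfl⟩ : ∃ a ≥ 0, a ^ 2 = A := ⟨√A, Real.sqrt_nonneg A, Real.sq_sqrt hA⟩
  obtain ⟨c, hc, rfl⟩ : ∃ c ≥ 0, c ^ 2 = C := ⟨√C, Real.sqrt_nonneg C, Real.sq_sqrt hC⟩
  have hpow {x : ℝ} (hx : 0 ≤ x) (n : ℕ) : (x ^ 2) ^ ((n : ℝ) / 2) = x ^ n := by
    rw [Real.rpow_div_two_eq_sqrt _ (sq_nonneg x), Real.sqrt_sq hx, Real.rpow_natCast]
  rw [show (5 : ℝ) = (5 : ℕ) by norm_num, show (3 : ℝ) = (3 : ℕ) by norm_num, hpow ha, hpow hc]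
  have hB_le : B ≤ 2 * (c * a) := by nlinarith [mul_nonneg hc ha]
  calc 2 * a ^ 2 * B ^ 3 = 2 * a ^ 2 * B * B ^ 2 := by ring
    _ ≤ 2 * a ^ 2 * (2 * (c * a)) * (2 * (c ^ 2 * a ^ 2)) := by gcongr
    _ = 8 * a ^ 5 * c ^ 3 := by ring

theorem Continuous.integrable_norm_mul_norm {E : Type*} [NormedAddCommGroup E] {v w : ℝ → E}
    (hv : Continuous v) (hw : Continuous w) (hvs : HasCompactSupport v) :
    Integrable (fun x => ‖v x‖ * ‖w x‖) :=
  (hv.norm.mul hw.norm).integrable_of_hasCompactSupport hvs.norm.mul_right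

theorem HasCompactSupport.norm_pow {α E : Type*} [TopologicalSpace α] [NormedAddCommGroup E]
    {v : α → E} (hv : HasCompactSupport v) {n : ℕ} (hn : n ≠ 0) :
    HasCompactSupport (fun x => ‖v x‖ ^ n) :=
  hv.comp_left (g := fun z => ‖z‖ ^ n) (by simp [hn])

theorem Continuous.integrable_norm_pow {E : Type*} [NormedAddCommGroup E] {v : ℝ → E}
    (hv : Continuous v) (hvs : HasCompactSupport v) {n : ℕ} (hn : n ≠ 0) :
    Integrable (fun x => ‖v x‖ ^ n) :=
  (hv.norm.pow n).integrable_of_hasCompactSupport (hvs.norm_pow hn)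

section RadialProfile

variable {E : Type*} [NormedAddCommGroup E] [InnerProductSpace ℝ E] {u : ℝ → E}

theorem abs_deriv_norm_sq_le {x : ℝ} (hu : DifferentiableAt ℝ u x) :
    |deriv (fun y => ‖u y‖ ^ 2) x| ≤ 2 * (‖u x‖ * ‖deriv u x‖) := by
  rw [hu.hasDerivAt.norm_sq.deriv, abs_mul, abs_two]
  gcongr
  exact abs_real_inner_le_norm _ _

variable (hu : ContDiff ℝ 1 u) (hsupp : HasCompactSupport u)
include hu hsupp

theorem sq_norm_le_two_mul_integral_Ioi (r : ℝ) :
    ‖u r‖ ^ 2 ≤ 2 * ∫ x in Ioi r, ‖u x‖ * ‖deriv u x‖ := by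
  have hf : ContDiff ℝ 1 (fun y => ‖u y‖ ^ 2) := hu.norm_sq ℝ
  have hfs : HasCompactSupport (fun y => ‖u y‖ ^ 2) := hsupp.norm_pow two_ne_zero
  have hint : IntegrableOn (fun x => ‖u x‖ * ‖deriv u x‖) (Ioi r) :=
    (hu.continuous.integrable_norm_mul_norm (hu.continuous_deriv le_rfl) hsupp).integrableOn
  calc ‖u r‖ ^ 2 = -∫ x in Ioi r, deriv (fun y => ‖u y‖ ^ 2) x := by
        rw [hfs.integral_Ioi_deriv_eq hf, neg_neg]
    _ ≤ ∫ x in Ioi r, |deriv (fun y => ‖u y‖ ^ 2) x| :=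
        (neg_le_abs _).trans abs_integral_le_integral_abs
    _ ≤ ∫ x in Ioi r, 2 * (‖u x‖ * ‖deriv u x‖) :=
        integral_mono_of_nonneg (.of_forall fun _ => abs_nonneg _) (hint.const_mul 2)
          (.of_forall fun x => abs_deriv_norm_sq_le (hu.differentiable one_ne_zero x))
    _ = 2 * ∫ x in Ioi r, ‖u x‖ * ‖deriv u x‖ := integral_const_mul _ _

theorem integral_Ioi_sq_norm_le_two_mul_integral_Ioi {R : ℝ} (hR : 0 ≤ R) :
    ∫ x in Ioi R, ‖u x‖ ^ 2 ≤ 2 * ∫ x in Ioi R, ‖x • u x‖ * ‖deriv u x‖ := by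
  have hf : ContDiff ℝ 1 (fun y => ‖u y‖ ^ 2) := hu.norm_sq ℝ
  have hfs : HasCompactSupport (fun y => ‖u y‖ ^ 2) := hsupp.norm_pow two_ne_zero
  have hg : ContDiff ℝ 1 (fun y => y * ‖u y‖ ^ 2) := contDiff_id.mul hf
  have hgs : HasCompactSupport (fun y => y * ‖u y‖ ^ 2) := hfs.mul_left
  have hderiv (x : ℝ) : deriv (fun y => y * ‖u y‖ ^ 2) x =
      ‖u x‖ ^ 2 + x * deriv (fun y => ‖u y‖ ^ 2) x := by
    simpa [Pi.mul_def] using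
      ((hasDerivAt_id' x).mul (hf.differentiable one_ne_zero x).hasDerivAt).deriv
  have hf_int : IntegrableOn (fun y => ‖u y‖ ^ 2) (Ioi R) :=
    (hu.continuous.integrable_norm_pow hsupp two_ne_zero).integrableOn
  have hxf'_int : IntegrableOn (fun x => x * deriv (fun y => ‖u y‖ ^ 2) x) (Ioi R) :=
    ((continuous_id.mul (hf.continuous_deriv le_rfl)).integrable_of_hasCompactSupport
      hfs.deriv.mul_left).integrableOn
  have hint : IntegrableOn (fun x => ‖x • u x‖ * ‖deriv u x‖) (Ioi R) :=
    ((continuous_id.smul hu.continuous).integrable_norm_mul_norm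
      (hu.continuous_deriv le_rfl) hsupp.smul_left).integrableOn
  have hboundary :
      ∫ x in Ioi R, ‖u x‖ ^ 2 + x * deriv (fun y => ‖u y‖ ^ 2) x = -(R * ‖u R‖ ^ 2) := by
    simp_rw [← hderiv]
    exact hgs.integral_Ioi_deriv_eq hg R
  rw [integral_add hf_int hxf'_int] at hboundary
  calc ∫ x in Ioi R, ‖u x‖ ^ 2 ≤ -∫ x in Ioi R, x * deriv (fun y => ‖u y‖ ^ 2) x := by
        nlinarith [sq_nonneg ‖u R‖]
    _ ≤ ∫ x in Ioi R, |x * deriv (fun y => ‖u y‖ ^ 2) x| :=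
        (neg_le_abs _).trans abs_integral_le_integral_abs
    _ ≤ ∫ x in Ioi R, 2 * (‖x • u x‖ * ‖deriv u x‖) := by
        refine integral_mono_of_nonneg (.of_forall fun _ => abs_nonneg _) (hint.const_mul 2)
          (.of_forall fun x => ?_)
        dsimp only
        rw [abs_mul, norm_smul, Real.norm_eq_abs]
        have := abs_deriv_norm_sq_le (hu.differentiable one_ne_zero x)
        calc |x| * |deriv (fun y => ‖u y‖ ^ 2) x|
            ≤ |x| * (2 * (‖u x‖ * ‖deriv u x‖)) := by gcongr
          _ = _ := by ring
    _ = 2 * ∫ x in Ioi R, ‖x • u x‖ * ‖deriv u x‖ := integral_const_mul _ _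

theorem sq_norm_le_two_mul_sqrt_mul_sqrt {R r : ℝ} (hr : R ≤ r) :
    ‖u r‖ ^ 2 ≤
      2 * (√(∫ x in Ioi R, ‖u x‖ ^ 2) * √(∫ x in Ioi R, ‖deriv u x‖ ^ 2)) := by
  have hu' := hu.continuous_deriv le_rfl
  calc ‖u r‖ ^ 2 ≤ 2 * ∫ x in Ioi r, ‖u x‖ * ‖deriv u x‖ :=
        sq_norm_le_two_mul_integral_Ioi hu hsupp r
    _ ≤ 2 * ∫ x in Ioi R, ‖u x‖ * ‖deriv u x‖ := by
        refine mul_le_mul_of_nonneg_left ?_ zero_le_two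
        exact setIntegral_mono_set
          (hu.continuous.integrable_norm_mul_norm hu' hsupp).integrableOn
          (.of_forall fun _ => by positivity) (Ioi_subset_Ioi hr).eventuallyLE
    _ ≤ _ := by
        gcongr
        exact integral_norm_mul_norm_le_sqrt_mul_sqrt
          ((hu.continuous.memLp_of_hasCompactSupport hsupp).restrict _)
          ((hu'.memLp_of_hasCompactSupport hsupp.deriv).restrict _)

theorem integral_Ioi_sq_norm_le_two_mul_sqrt_mul_sqrt {R : ℝ} (hR : 0 ≤ R) :
    ∫ x in Ioi R, ‖u x‖ ^ 2 ≤
      2 * (√(∫ x in Ioi R, x ^ 2 * ‖u x‖ ^ 2) * √(∫ x in Ioi R, ‖deriv u x‖ ^ 2)) := by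
  have hweight : ∫ x in Ioi R, x ^ 2 * ‖u x‖ ^ 2 = ∫ x in Ioi R, ‖x • u x‖ ^ 2 := by
    simp_rw [norm_smul, mul_pow, Real.norm_eq_abs, sq_abs]
  rw [hweight]
  calc ∫ x in Ioi R, ‖u x‖ ^ 2 ≤ 2 * ∫ x in Ioi R, ‖x • u x‖ * ‖deriv u x‖ :=
        integral_Ioi_sq_norm_le_two_mul_integral_Ioi hu hsupp hR
    _ ≤ _ := by
        gcongr
        exact integral_norm_mul_norm_le_sqrt_mul_sqrt
          (((continuous_id.smul hu.continuous).memLp_of_hasCompactSupport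
            hsupp.smul_left).restrict _)
          (((hu.continuous_deriv le_rfl).memLp_of_hasCompactSupport hsupp.deriv).restrict _)

theorem integral_Ioi_norm_pow_four_le (R : ℝ) :
    ∫ x in Ioi R, ‖u x‖ ^ 4 ≤
      2 * (√(∫ x in Ioi R, ‖u x‖ ^ 2) * √(∫ x in Ioi R, ‖deriv u x‖ ^ 2)) *
        ∫ x in Ioi R, ‖u x‖ ^ 2 := by
  rw [← integral_const_mul]
  refine setIntegral_mono_on ?_ ?_ measurableSet_Ioi fun x hx => ?_
  · exact (hu.continuous.integrable_norm_pow hsupp four_ne_zero).integrableOn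
  · exact (hu.continuous.integrable_norm_pow hsupp two_ne_zero).integrableOn.const_mul _
  · rw [show ‖u x‖ ^ 4 = ‖u x‖ ^ 2 * ‖u x‖ ^ 2 by ring]
    gcongr
    exact sq_norm_le_two_mul_sqrt_mul_sqrt hu hsupp hx.le

end RadialProfile

/-- For `u : ℝ → ℂ` continuously differentiable with compact support and `R ≥ 0`,
`∫_R^∞ |u(r)|⁴ dr ≤ 8 ‖u'‖_{L²(R,∞)}^{5/2} ‖r·u‖_{L²(R,∞)}^{3/2}`. -/
theorem stmt3 (u : ℝ → ℂ) (hu : ContDiff ℝ 1 u) (hsupp : HasCompactSupport u)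
    (R : ℝ) (hR : 0 ≤ R) :
    (∫ r in Set.Ioi R, ‖u r‖ ^ 4) ≤
      8 * Real.sqrt (∫ r in Set.Ioi R, ‖deriv u r‖ ^ 2) ^ ((5 : ℝ) / 2) *
        Real.sqrt (∫ r in Set.Ioi R, r ^ 2 * ‖u r‖ ^ 2) ^ ((3 : ℝ) / 2) := by
  have h_four := integral_Ioi_norm_pow_four_le hu hsupp R
  have h_sq := integral_Ioi_sq_norm_le_two_mul_sqrt_mul_sqrt hu hsupp hR
  set A := √(∫ r in Ioi R, ‖deriv u r‖ ^ 2)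
  set B := √(∫ r in Ioi R, ‖u r‖ ^ 2)
  set C := √(∫ r in Ioi R, r ^ 2 * ‖u r‖ ^ 2)
  have hB_sq : B ^ 2 = ∫ r in Ioi R, ‖u r‖ ^ 2 :=
    Real.sq_sqrt (integral_nonneg fun _ => by positivity)
  rw [← hB_sq] at h_four h_sq
  calc ∫ r in Ioi R, ‖u r‖ ^ 4 ≤ 2 * (B * A) * B ^ 2 := h_four
    _ = 2 * A * B ^ 3 := by ring
    _ ≤ 8 * A ^ ((5 : ℝ) / 2) * C ^ ((3 : ℝ) / 2) :=
        mul_pow_three_le_of_sq_le (Real.sqrt_nonneg _) (Real.sqrt_nonneg _) h_sq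
end

section
/- Let u : ℝ → ℂ be continuously differentiable with compact support. Then for every R ≥ 0, ∫_R^∞ |u(r)|⁴ r dr ≤ 4√2 · (∫_R^∞ |u'(r)|² dr) · (∫_R^∞ |u(r)|² r² dr). -/
/-!
Put `g r = ‖u r‖² r`. Since `g' = 2 ⟪u, u'⟫ r + ‖u‖²` and `g` vanishes at infinity,
`g r + ∫_r^∞ ‖u‖² = -2 ∫_r^∞ ⟪u, u'⟫ s ds ≤ 2 ∫_r^∞ ‖u‖ ‖u'‖ s ds ≤ 2 √A √B` for `r ≥ R`, by
Cauchy–Schwarz, where `A = ∫_R^∞ ‖u'‖²` and `B = ∫_R^∞ ‖u‖² r²`. Both terms on the left are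
nonnegative, so `g ≤ 2 √(AB)` on `[R, ∞)` and `∫_R^∞ ‖u‖² ≤ 2 √(AB)`. Hence
`∫_R^∞ ‖u‖⁴ r = ∫_R^∞ ‖u‖² g ≤ 4AB ≤ 4√2 AB`.
-/

open MeasureTheory Set Filter

open scoped RealInnerProductSpace

theorem integral_mul_le_sqrt_integral_sq_mul_sqrt_integral_sq {α : Type*} [MeasurableSpace α]
    {μ : Measure α} {f g : α → ℝ} (hf₀ : 0 ≤ᵐ[μ] f) (hg₀ : 0 ≤ᵐ[μ] g) (hf : MemLp f 2 μ)
    (hg : MemLp g 2 μ) :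
    ∫ a, f a * g a ∂μ ≤ √(∫ a, f a ^ 2 ∂μ) * √(∫ a, g a ^ 2 ∂μ) := by
  have h := integral_mul_le_Lp_mul_Lq_of_nonneg Real.HolderConjugate.two_two hf₀ hg₀
    (by rwa [ENNReal.ofReal_ofNat]) (by rwa [ENNReal.ofReal_ofNat])
  simpa only [Real.sqrt_eq_rpow, Real.rpow_two] using h

theorem HasCompactSupport.integral_Ioi_of_hasDerivAt {E : Type*} [NormedAddCommGroup E]
    [NormedSpace ℝ E] [CompleteSpace E] {f f' : ℝ → E} (hf : HasCompactSupport f)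
    (hderiv : ∀ x, HasDerivAt f (f' x) x) {r : ℝ} (hf' : IntegrableOn f' (Ioi r)) :
    ∫ x in Ioi r, f' x = -f r := by
  simpa using integral_Ioi_of_hasDerivAt_of_tendsto' (fun x _ => hderiv x) hf'
    (hf.is_zero_at_infty.mono_left atTop_le_cocompact)

theorem HasCompactSupport.integrable_of_eq_zero {X F G : Type*} [TopologicalSpace X]
    [MeasurableSpace X] [OpensMeasurableSpace X] {μ : Measure X} [IsFiniteMeasureOnCompacts μ]
    [Zero F] [NormedAddCommGroup G] {f : X → F} {g : X → G} (hf : HasCompactSupport f)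
    (hg : Continuous g) (h₀ : ∀ x, f x = 0 → g x = 0) : Integrable g μ :=
  hg.integrable_of_hasCompactSupport (hf.mono fun x hx hfx => hx (h₀ x hfx))

section RadialProfile

variable {E : Type*} [NormedAddCommGroup E] [InnerProductSpace ℝ E] {u : ℝ → E}

theorem norm_sq_mul_add_integral_norm_sq_eq (hu : ContDiff ℝ 1 u) (hsupp : HasCompactSupport u)
    (r : ℝ) :
    ‖u r‖ ^ 2 * r + ∫ s in Ioi r, ‖u s‖ ^ 2 = -2 * ∫ s in Ioi r, ⟪u s, deriv u s⟫ * s := by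
  have hc := hu.continuous
  have hc' := hu.continuous_deriv le_rfl
  have hderiv (x : ℝ) : HasDerivAt (fun s => ‖u s‖ ^ 2 * s)
      (2 * ⟪u x, deriv u x⟫ * x + ‖u x‖ ^ 2) x :=
    (((hu.differentiable one_ne_zero x).hasDerivAt.norm_sq).mul (hasDerivAt_id' x)).congr_deriv
      (by ring)
  have hinner : Integrable (fun s => 2 * ⟪u s, deriv u s⟫ * s) (volume.restrict (Ioi r)) :=
    hsupp.integrable_of_eq_zero ((continuous_const.mul (hc.inner hc')).mul continuous_id)
      fun s hs => by simp [hs]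
  have hnorm : Integrable (fun s => ‖u s‖ ^ 2) (volume.restrict (Ioi r)) :=
    hsupp.integrable_of_eq_zero (hc.norm.pow 2) fun s hs => by simp [hs]
  have hftc := (hsupp.mono fun s hs hus => hs (by simp [hus])).integral_Ioi_of_hasDerivAt
    hderiv (hinner.add hnorm)
  rw [integral_add hinner hnorm] at hftc
  simp only [mul_assoc, integral_const_mul] at hftc
  linarith

theorem norm_sq_mul_add_integral_norm_sq_le (hu : ContDiff ℝ 1 u) (hsupp : HasCompactSupport u)
    {r : ℝ} (hr : 0 ≤ r) :
    ‖u r‖ ^ 2 * r + ∫ s in Ioi r, ‖u s‖ ^ 2 ≤ 2 * ∫ s in Ioi r, ‖u s‖ * ‖deriv u s‖ * s := by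
  have hc := hu.continuous
  have hc' := hu.continuous_deriv le_rfl
  rw [norm_sq_mul_add_integral_norm_sq_eq hu hsupp, neg_mul, ← mul_neg, ← integral_neg]
  gcongr 2 * ?_
  refine setIntegral_mono_on ?_ ?_ measurableSet_Ioi fun s hs => ?_
  · exact (hsupp.integrable_of_eq_zero ((hc.inner hc').mul continuous_id)
      fun s hs => by simp [hs]).neg
  · exact hsupp.integrable_of_eq_zero ((hc.norm.mul hc'.norm).mul continuous_id)
      fun s hs => by simp [hs]
  rw [← neg_mul]
  exact mul_le_mul_of_nonneg_right ((neg_le_abs _).trans (abs_real_inner_le_norm _ _))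
    (hr.trans (mem_Ioi.1 hs).le)

theorem integral_norm_mul_norm_deriv_mul_le (hu : ContDiff ℝ 1 u)
    (hsupp : HasCompactSupport u) {R r : ℝ} (hR : 0 ≤ R) (hr : R ≤ r) :
    ∫ s in Ioi r, ‖u s‖ * ‖deriv u s‖ * s ≤
      √(∫ s in Ioi R, ‖deriv u s‖ ^ 2) * √(∫ s in Ioi R, ‖u s‖ ^ 2 * s ^ 2) := by
  have hc := hu.continuous
  have hc' := hu.continuous_deriv le_rfl
  have hnonneg : ∀ᵐ s ∂volume.restrict (Ioi R), 0 ≤ ‖u s‖ * s :=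
    (ae_restrict_iff' measurableSet_Ioi).2 <| .of_forall fun s hs =>
      mul_nonneg (norm_nonneg _) (hR.trans (le_of_lt hs))
  calc ∫ s in Ioi r, ‖u s‖ * ‖deriv u s‖ * s
      = ∫ s in Ioi r, ‖deriv u s‖ * (‖u s‖ * s) := by
        congr 1 with s
        ring
    _ ≤ ∫ s in Ioi R, ‖deriv u s‖ * (‖u s‖ * s) := by
        refine setIntegral_mono_set ?_ ?_ (Ioi_subset_Ioi hr).eventuallyLE
        · exact hsupp.integrable_of_eq_zero (hc'.norm.mul (hc.norm.mul continuous_id))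
            fun s hs => by simp [hs]
        · filter_upwards [hnonneg] with s hs using mul_nonneg (norm_nonneg _) hs
    _ ≤ √(∫ s in Ioi R, ‖deriv u s‖ ^ 2) * √(∫ s in Ioi R, (‖u s‖ * s) ^ 2) :=
        integral_mul_le_sqrt_integral_sq_mul_sqrt_integral_sq (.of_forall fun _ => norm_nonneg _)
          hnonneg ((hc'.norm.memLp_of_hasCompactSupport hsupp.deriv.norm).restrict _)
          (((hc.norm.mul continuous_id).memLp_of_hasCompactSupport
            (hsupp.mono fun s hs hus => hs (by simp [hus]))).restrict _)
    _ = √(∫ s in Ioi R, ‖deriv u s‖ ^ 2) * √(∫ s in Ioi R, ‖u s‖ ^ 2 * s ^ 2) := by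
        simp only [mul_pow]

theorem norm_sq_mul_le_of_le (hu : ContDiff ℝ 1 u) (hsupp : HasCompactSupport u) {R r : ℝ}
    (hR : 0 ≤ R) (hr : R ≤ r) :
    ‖u r‖ ^ 2 * r ≤
      2 * (√(∫ s in Ioi R, ‖deriv u s‖ ^ 2) * √(∫ s in Ioi R, ‖u s‖ ^ 2 * s ^ 2)) := by
  have hmass : 0 ≤ ∫ s in Ioi r, ‖u s‖ ^ 2 :=
    setIntegral_nonneg measurableSet_Ioi fun _ _ => by positivity
  linarith [norm_sq_mul_add_integral_norm_sq_le hu hsupp (hR.trans hr),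
    integral_norm_mul_norm_deriv_mul_le hu hsupp hR hr]

theorem integral_norm_sq_le (hu : ContDiff ℝ 1 u) (hsupp : HasCompactSupport u) {R : ℝ}
    (hR : 0 ≤ R) :
    ∫ s in Ioi R, ‖u s‖ ^ 2 ≤
      2 * (√(∫ s in Ioi R, ‖deriv u s‖ ^ 2) * √(∫ s in Ioi R, ‖u s‖ ^ 2 * s ^ 2)) := by
  have hweight : 0 ≤ ‖u R‖ ^ 2 * R := by positivity
  linarith [norm_sq_mul_add_integral_norm_sq_le hu hsupp hR,
    integral_norm_mul_norm_deriv_mul_le hu hsupp hR le_rfl]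

theorem integral_norm_pow_four_mul_le (hu : ContDiff ℝ 1 u) (hsupp : HasCompactSupport u) {R : ℝ}
    (hR : 0 ≤ R) :
    ∫ r in Ioi R, ‖u r‖ ^ 4 * r ≤
      4 * (∫ r in Ioi R, ‖deriv u r‖ ^ 2) * ∫ r in Ioi R, ‖u r‖ ^ 2 * r ^ 2 := by
  set A := ∫ r in Ioi R, ‖deriv u r‖ ^ 2
  set B := ∫ r in Ioi R, ‖u r‖ ^ 2 * r ^ 2
  have hA : 0 ≤ A := setIntegral_nonneg measurableSet_Ioi fun _ _ => by positivity
  have hB : 0 ≤ B := setIntegral_nonneg measurableSet_Ioi fun _ _ => by positivity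
  have hc := hu.continuous
  calc ∫ r in Ioi R, ‖u r‖ ^ 4 * r
      = ∫ r in Ioi R, ‖u r‖ ^ 2 * (‖u r‖ ^ 2 * r) := by
        congr 1 with r
        ring
    _ ≤ ∫ r in Ioi R, ‖u r‖ ^ 2 * (2 * (√A * √B)) := by
        refine setIntegral_mono_on ?_ ?_ measurableSet_Ioi fun r hr =>
          mul_le_mul_of_nonneg_left (norm_sq_mul_le_of_le hu hsupp hR (mem_Ioi.1 hr).le)
            (by positivity)
        · exact hsupp.integrable_of_eq_zero
            ((hc.norm.pow 2).mul ((hc.norm.pow 2).mul continuous_id)) fun s hs => by simp [hs]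
        · exact hsupp.integrable_of_eq_zero ((hc.norm.pow 2).mul continuous_const)
            fun s hs => by simp [hs]
    _ = (∫ r in Ioi R, ‖u r‖ ^ 2) * (2 * (√A * √B)) := integral_mul_const _ _
    _ ≤ 2 * (√A * √B) * (2 * (√A * √B)) := by gcongr; exact integral_norm_sq_le hu hsupp hR
    _ = 4 * A * B := by
        rw [show 2 * (√A * √B) * (2 * (√A * √B)) = 4 * √A ^ 2 * √B ^ 2 by ring,
          Real.sq_sqrt hA, Real.sq_sqrt hB]

end RadialProfile

/-- For `u : ℝ → ℂ` continuously differentiable with compact support and `R ≥ 0`,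
`∫_R^∞ |u(r)|⁴ r dr ≤ 4√2 (∫_R^∞ |u'(r)|² dr)(∫_R^∞ |u(r)|² r² dr)`. -/
theorem stmt5 (u : ℝ → ℂ) (hu : ContDiff ℝ 1 u) (hsupp : HasCompactSupport u)
    (R : ℝ) (hR : 0 ≤ R) :
    (∫ r in Set.Ioi R, ‖u r‖ ^ 4 * r) ≤
      4 * Real.sqrt 2 * (∫ r in Set.Ioi R, ‖deriv u r‖ ^ 2) *
        (∫ r in Set.Ioi R, ‖u r‖ ^ 2 * r ^ 2) := by
  have hA : 0 ≤ ∫ r in Ioi R, ‖deriv u r‖ ^ 2 :=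
    setIntegral_nonneg measurableSet_Ioi fun _ _ => by positivity
  have hB : 0 ≤ ∫ r in Ioi R, ‖u r‖ ^ 2 * r ^ 2 :=
    setIntegral_nonneg measurableSet_Ioi fun _ _ => by positivity
  have hsqrt : 1 ≤ Real.sqrt 2 := Real.one_le_sqrt.2 one_le_two
  refine (integral_norm_pow_four_mul_le hu hsupp hR).trans ?_
  gcongr
  linarith
end
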